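/- Let G be the group of order automorphisms of ℚ. For every nowhere dense set E ⊆ ℚ, every nonempty open interval J of ℚ disjoint from the closure of E (with endpoints not in the closure of E, taken inside ℝ or ℚ's order topology), and every nowhere dense set E' ⊆ ℚ, there exists an order automorphism π of ℚ such that π restricted to E is the identity and π(E' ∩ J) ∩ J = ∅. -/
import Mathlib

/-- Piecewise linear map fixing everything outside `(p,r)` and sending `q ↦ q'`. -/
def plFun (p r q q' x : ℚ) : ℚ :=
  if x ≤ p then x
  else if x ≤ q then p + (x - p) * ((q' - p) / (q - p))
  else if x < r then q' + (x - q) * ((r - q') / (r - q))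
  else x

section pl

variable {p r q q' : ℚ} (hpq : p < q) (hqr : q < r) (hpq' : p < q') (hq'r : q' < r)

lemma plFun_left {x : ℚ} (hx : x ≤ p) : plFun p r q q' x = x := if_pos hx

include hpq hqr in
lemma plFun_right {x : ℚ} (hx : r ≤ x) : plFun p r q q' x = x := by
  unfold plFun
  rw [if_neg (by linarith), if_neg (by linarith), if_neg (by linarith)]

include hpq hpq' hq'r in
lemma plFun_piece2 {x : ℚ} (h1 : p < x) (h2 : x ≤ q) :
    plFun p r q q' x = p + (x - p) * ((q' - p) / (q - p)) ∧
    p < plFun p r q q' x ∧ plFun p r q q' x ≤ q' := by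
  have hv : plFun p r q q' x = p + (x - p) * ((q' - p) / (q - p)) := by
    unfold plFun; rw [if_neg (by linarith), if_pos h2]
  have hs : 0 < (q' - p) / (q - p) := div_pos (by linarith) (by linarith)
  have key : (q - p) * ((q' - p) / (q - p)) = q' - p := by
    rw [mul_comm, div_mul_cancel₀ _ (show q - p ≠ 0 by linarith)]
  refine ⟨hv, ?_, ?_⟩
  · rw [hv]; nlinarith
  · rw [hv]; nlinarith [mul_le_mul_of_nonneg_right (by linarith : x - p ≤ q - p) hs.le]

include hpq hqr hq'r in
lemma plFun_piece3 {x : ℚ} (h1 : q < x) (h2 : x < r) :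
    plFun p r q q' x = q' + (x - q) * ((r - q') / (r - q)) ∧
    q' < plFun p r q q' x ∧ plFun p r q q' x < r := by
  have hv : plFun p r q q' x = q' + (x - q) * ((r - q') / (r - q)) := by
    unfold plFun; rw [if_neg (by linarith), if_neg (by linarith), if_pos h2]
  have hs : 0 < (r - q') / (r - q) := div_pos (by linarith) (by linarith)
  have key : (r - q) * ((r - q') / (r - q)) = r - q' := by
    rw [mul_comm, div_mul_cancel₀ _ (show r - q ≠ 0 by linarith)]
  refine ⟨hv, ?_, ?_⟩
  · rw [hv]; nlinarith
  · rw [hv]; nlinarith [mul_lt_mul_of_pos_right (by linarith : x - q < r - q) hs]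

include hpq hqr hpq' hq'r in
lemma plFun_at_q : plFun p r q q' q = q' := by
  obtain ⟨hv, -⟩ := plFun_piece2 hpq hpq' hq'r hpq le_rfl (r := r)
  have key : (q - p) * ((q' - p) / (q - p)) = q' - p := by
    rw [mul_comm, div_mul_cancel₀ _ (show q - p ≠ 0 by linarith)]
  rw [hv]; linarith [key]

include hpq hqr hpq' hq'r in
lemma plFun_strictMono : StrictMono (plFun p r q q') := by
  have hs1 : 0 < (q' - p) / (q - p) := div_pos (by linarith) (by linarith)
  have hs2 : 0 < (r - q') / (r - q) := div_pos (by linarith) (by linarith)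
  intro x y hxy
  rcases le_or_gt x p with hx1 | hx1
  · rw [plFun_left hx1]
    rcases le_or_gt y p with hy1 | hy1
    · rw [plFun_left hy1]; exact hxy
    · rcases le_or_gt y q with hy2 | hy2
      · obtain ⟨-, h, -⟩ := plFun_piece2 hpq hpq' hq'r hy1 hy2 (r := r); linarith
      · rcases lt_or_ge y r with hy3 | hy3
        · obtain ⟨-, h, -⟩ := plFun_piece3 hpq hqr hq'r hy2 hy3; linarith
        · rw [plFun_right hpq hqr hy3]; linarith
  · rcases le_or_gt x q with hx2 | hx2
    · obtain ⟨hvx, -, hxu⟩ := plFun_piece2 hpq hpq' hq'r hx1 hx2 (r := r)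
      rcases le_or_gt y q with hy2 | hy2
      · obtain ⟨hvy, -, -⟩ := plFun_piece2 hpq hpq' hq'r (by linarith) hy2 (r := r)
        rw [hvx, hvy]
        have := mul_lt_mul_of_pos_right (by linarith : x - p < y - p) hs1
        linarith
      · rcases lt_or_ge y r with hy3 | hy3
        · obtain ⟨-, h, -⟩ := plFun_piece3 hpq hqr hq'r hy2 hy3; linarith
        · rw [plFun_right hpq hqr hy3]; linarith
    · rcases lt_or_ge x r with hx3 | hx3
      · obtain ⟨hvx, -, hxu⟩ := plFun_piece3 hpq hqr hq'r hx2 hx3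
        rcases lt_or_ge y r with hy3 | hy3
        · obtain ⟨hvy, -, -⟩ := plFun_piece3 hpq hqr hq'r (by linarith) hy3
          rw [hvx, hvy]
          have := mul_lt_mul_of_pos_right (by linarith : x - q < y - q) hs2
          linarith
        · rw [plFun_right hpq hqr hy3]; linarith
      · rw [plFun_right hpq hqr hx3, plFun_right hpq hqr (by linarith)]; exact hxy

include hpq hqr hpq' hq'r in
lemma plFun_surjective : Function.Surjective (plFun p r q q') := by
  intro y
  rcases le_or_gt y p with hy1 | hy1
  · exact ⟨y, plFun_left hy1⟩
  rcases le_or_gt y q' with hy2 | hy2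
  · -- preimage via the inverse pl map (with q, q' swapped)
    refine ⟨plFun p r q' q y, ?_⟩
    obtain ⟨hv, hl, hu⟩ := plFun_piece2 hpq' hpq hqr hy1 hy2 (r := r)
    obtain ⟨hv2, -, -⟩ := plFun_piece2 hpq hpq' hq'r (x := plFun p r q' q y) hl hu (r := r)
    rw [hv2, hv]
    have h1 : q - p ≠ 0 := by linarith
    have h2 : q' - p ≠ 0 := by linarith
    field_simp
    ring
  rcases lt_or_ge y r with hy3 | hy3
  · refine ⟨plFun p r q' q y, ?_⟩
    obtain ⟨hv, hl, hu⟩ := plFun_piece3 hpq' hq'r hqr hy2 hy3 (q' := q)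
    obtain ⟨hv2, -, -⟩ := plFun_piece3 hpq hqr hq'r (x := plFun p r q' q y) hl hu
    rw [hv2, hv]
    have h1 : r - q ≠ 0 := by linarith
    have h2 : r - q' ≠ 0 := by linarith
    field_simp
    ring
  · exact ⟨y, plFun_right hpq hqr hy3⟩

/-- The piecewise linear map as an order isomorphism. -/
noncomputable def plIso : ℚ ≃o ℚ :=
  StrictMono.orderIsoOfSurjective _ (plFun_strictMono hpq hqr hpq' hq'r)
    (plFun_surjective hpq hqr hpq' hq'r)

lemma plIso_apply (x : ℚ) : plIso hpq hqr hpq' hq'r x = plFun p r q q' x := rfl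

end pl

/-- Given a nowhere dense `E ⊆ ℚ`, a nonempty open interval `J = (a,b)` disjoint
from the closure of `E` whose endpoints avoid the closure of `E`, and another
nowhere dense `E'`, there is an order automorphism of `ℚ` fixing `E` pointwise
that moves `E' ∩ J` out of `J`. -/
theorem stmt4 (E : Set ℚ) (hE : IsNowhereDense E) (a b : ℚ) (hab : a < b)
    (hdisj : Disjoint (Set.Ioo a b) (closure E))
    (ha : a ∉ closure E) (hb : b ∉ closure E)
    (E' : Set ℚ) (hE' : IsNowhereDense E') :
    ∃ π : ℚ ≃o ℚ, (∀ q ∈ E, π q = q) ∧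
      (⇑π '' (E' ∩ Set.Ioo a b)) ∩ Set.Ioo a b = ∅ := by
  -- find a' < a with (a', a] avoiding closure E, and b' > b similarly
  have hopen : IsOpen (closure E)ᶜ := isClosed_closure.isOpen_compl
  obtain ⟨l₁, u₁, hmem1, hsub1⟩ :=
    mem_nhds_iff_exists_Ioo_subset.mp (hopen.mem_nhds ha)
  obtain ⟨l₂, u₂, hmem2, hsub2⟩ :=
    mem_nhds_iff_exists_Ioo_subset.mp (hopen.mem_nhds hb)
  obtain ⟨a', ha'1, ha'2⟩ := exists_between hmem1.1
  obtain ⟨b', hb'1, hb'2⟩ := exists_between hmem2.2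
  -- Ioo a' b' avoids closure E
  have hEfree : ∀ x, a' < x → x < b' → x ∉ closure E := by
    intro x h1 h2 hx
    rcases le_or_gt x a with h3 | h3
    · exact hsub1 ⟨lt_of_le_of_lt ha'1.le h1, lt_of_le_of_lt h3 hmem1.2⟩ hx
    rcases lt_or_ge x b with h4 | h4
    · exact hdisj.le_bot ⟨⟨h3, h4⟩, hx⟩
    · exact hsub2 ⟨lt_of_lt_of_le hmem2.1 h4, lt_trans h2 hb'2⟩ hx
  -- find (c,d) ⊆ (a,b) avoiding closure E'
  have : ¬ Set.Ioo a b ⊆ closure E' := by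
    intro h
    obtain ⟨m, hm⟩ := exists_between hab
    have : m ∈ interior (closure E') :=
      (isOpen_Ioo.subset_interior_iff.mpr h) ⟨hm.1, hm.2⟩
    rw [hE'] at this
    exact this
  obtain ⟨x₀, hx₀ab, hx₀⟩ := Set.not_subset.mp this
  obtain ⟨l₃, u₃, hmem3, hsub3⟩ :=
    mem_nhds_iff_exists_Ioo_subset.mp (isClosed_closure.isOpen_compl.mem_nhds hx₀)
  obtain ⟨c, hc1, hc2⟩ := exists_between (max_lt hx₀ab.1 hmem3.1 : max a l₃ < x₀)
  obtain ⟨d, hd1, hd2⟩ := exists_between (lt_min hx₀ab.2 hmem3.2 : x₀ < min b u₃)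
  have hac : a < c := lt_of_le_of_lt (le_max_left _ _) hc1
  have hcd : c < d := lt_trans hc2 hd1
  have hdb : d < b := lt_of_lt_of_le hd2 (min_le_left _ _)
  have hE'free : ∀ x, c < x → x < d → x ∉ E' := by
    intro x h1 h2 hx
    exact hsub3 ⟨lt_of_le_of_lt (le_max_right a l₃) (lt_trans hc1 h1),
      lt_of_lt_of_le (lt_trans h2 hd2) (min_le_right b u₃)⟩ (subset_closure hx)
  -- the two pl isos
  have h1 : a' < c := lt_trans ha'2 hac
  have h2 : c < d := hcd
  have h3 : a' < a := ha'2
  have h4 : a < d := lt_trans hac hcd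
  have h5 : a < b' := lt_trans hab hb'1
  have h6 : d < b' := lt_trans hdb hb'1
  have h7 : b < b' := hb'1
  let f := plIso h1 h2 h3 h4
  let g := plIso h4 h6 hab h7
  refine ⟨f.trans g, ?_, ?_⟩
  · intro x hx
    have hxE : x ≤ a' ∨ b' ≤ x := by
      by_contra hcon
      push_neg at hcon
      exact hEfree x hcon.1 hcon.2 (subset_closure hx)
    have hfx : f x = x := by
      show plFun a' d c a x = x
      rcases hxE with h | h
      · exact plFun_left h
      · exact plFun_right h1 h2 (le_trans h6.le h)
    show g (f x) = x
    rw [hfx]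
    show plFun a b' d b x = x
    rcases hxE with h | h
    · exact plFun_left (le_trans h h3.le)
    · exact plFun_right h4 h6 h
  · ext y
    simp only [Set.mem_inter_iff, Set.mem_image, Set.mem_empty_iff_false, iff_false]
    rintro ⟨⟨x, ⟨hxE', hxa, hxb⟩, rfl⟩, hy⟩
    have hgf : (f.trans g) x = plFun a b' d b (plFun a' d c a x) := rfl
    rcases le_or_gt x c with hxc | hxc
    · -- f x ≤ a, so π x ≤ a
      obtain ⟨-, -, hfu⟩ := plFun_piece2 h1 h3 h4 (lt_trans h3 hxa) hxc
      have : (f.trans g) x ≤ a := by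
        rw [hgf, plFun_left hfu]
        exact hfu
      exact absurd hy.1 (not_lt.mpr this)
    rcases lt_or_ge x d with hxd | hxd
    · exact hE'free x hxc hxd hxE'
    · -- f x = x, g x ≥ b
      have hfx : plFun a' d c a x = x := plFun_right h1 h2 hxd
      have hgm := (plFun_strictMono h4 h6 hab h7).monotone
      have hgd : plFun a b' d b d = b := plFun_at_q h4 h6 hab h7
      have hle : plFun a b' d b d ≤ plFun a b' d b x := hgm hxd
      rw [hgd] at hle
      have : b ≤ (f.trans g) x := by rw [hgf, hfx]; exact hle
      exact absurd hy.2 (not_lt.mpr this)
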